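/- If 3 ≤ d ≤ 9, β and R are positive integers with β ≥ 0.6R and R ≥ 750, then Σ_{i=1}^{⌊d/2⌋} S_2(d,i) · β^(i-d+1) ≤ R^(-1/2). -/

import Mathlib

/-!
A partition of `Fin d` into blocks of size at least two is determined by the map sending each
point to the least element of its block. That map `f` satisfies `f v ≤ v` and has no singleton
fibre, so there are at most `d !` such partitions (and only `5` for `d = 4`, by enumeration).
Since `i ≤ d / 2`, every exponent of `β` is at most `-m` with `m = d - d / 2 - 1 ≥ 1`; with
`s = √R ≥ 27` and `β ≥ 0.6 s²` it remains to check `F s ≤ (0.6 s²) ^ m`, which follows from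
`27 F ≤ 0.6 ^ m 27 ^ (2 m)`, a numerical check for each `d`.
-/

/-- `S2 d i` is the number of partitions of a `d`-element set into exactly `i`
blocks, each of size at least `2`. -/
def S2 (d i : ℕ) : ℕ :=
  (Finset.univ.filter fun P : Finset (Finset (Fin d)) =>
    P.card = i ∧ (∀ p ∈ P, 2 ≤ p.card) ∧
      ∀ v : Fin d, (P.filter fun p => v ∈ p).card = 1).card

open Finset Nat

namespace SetPartition

variable {α : Type*} [LinearOrder α] {P : Finset (Finset α)}

def block (P : Finset (Finset α)) (v : α) : Finset α := (P.filter (v ∈ ·)).sup id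

-- Inserting `v` makes the minimum total and gives `blockMin P v ≤ v` for every `P`.
def blockMin (P : Finset (Finset α)) (v : α) : α :=
  (insert v (block P v)).min' (insert_nonempty _ _)

lemma blockMin_le (P : Finset (Finset α)) (v : α) : blockMin P v ≤ v :=
  min'_le _ _ (mem_insert_self _ _)

lemma filter_mem_eq_singleton_block (hP : ∀ v : α, #(P.filter (v ∈ ·)) = 1) (v : α) :
    P.filter (v ∈ ·) = {block P v} := by
  obtain ⟨b, hb⟩ := card_eq_one.mp (hP v)
  simp [block, hb]

lemma block_mem_and_mem_block (hP : ∀ v : α, #(P.filter (v ∈ ·)) = 1) (v : α) :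
    block P v ∈ P ∧ v ∈ block P v :=
  mem_filter.mp (filter_mem_eq_singleton_block hP v ▸ mem_singleton_self (block P v))

lemma eq_block_of_mem (hP : ∀ v : α, #(P.filter (v ∈ ·)) = 1) {p : Finset α} {v : α}
    (hp : p ∈ P) (hv : v ∈ p) : p = block P v :=
  mem_singleton.mp (filter_mem_eq_singleton_block hP v ▸ mem_filter.mpr ⟨hp, hv⟩)

lemma blockMin_eq_min' (hP : ∀ v : α, #(P.filter (v ∈ ·)) = 1) (v : α) :
    blockMin P v = (block P v).min' ⟨v, (block_mem_and_mem_block hP v).2⟩ := by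
  simp only [blockMin, insert_eq_of_mem (block_mem_and_mem_block hP v).2]

lemma blockMin_mem_block (hP : ∀ v : α, #(P.filter (v ∈ ·)) = 1) (v : α) :
    blockMin P v ∈ block P v := by
  rw [blockMin_eq_min' hP]; exact min'_mem _ _

lemma blockMin_eq_iff (hP : ∀ v : α, #(P.filter (v ∈ ·)) = 1) {v w : α} :
    blockMin P w = blockMin P v ↔ w ∈ block P v := by
  constructor
  · intro h
    have hw := eq_block_of_mem hP (block_mem_and_mem_block hP w).1 (blockMin_mem_block hP w)
    have hv := eq_block_of_mem hP (block_mem_and_mem_block hP v).1 (blockMin_mem_block hP v)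
    rw [hv, ← h, ← hw]
    exact (block_mem_and_mem_block hP w).2
  · intro h
    have hwv := eq_block_of_mem hP (block_mem_and_mem_block hP v).1 h
    simp only [blockMin_eq_min' hP, ← hwv]

variable [Fintype α]

lemma filter_blockMin_eq (hP : ∀ v : α, #(P.filter (v ∈ ·)) = 1) (v : α) :
    univ.filter (blockMin P · = blockMin P v) = block P v := by
  ext w; simp [blockMin_eq_iff hP]

lemma eq_image_block (hP : ∀ v : α, #(P.filter (v ∈ ·)) = 1) (hne : ∀ p ∈ P, p.Nonempty) :
    P = univ.image (block P) := by
  ext p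
  simp only [mem_image, mem_univ, true_and]
  constructor
  · intro hp
    obtain ⟨v, hv⟩ := hne p hp
    exact ⟨v, (eq_block_of_mem hP hp hv).symm⟩
  · rintro ⟨v, rfl⟩
    exact (block_mem_and_mem_block hP v).1

end SetPartition

open SetPartition

def partitionsWithoutSingletons (α : Type*) [Fintype α] [DecidableEq α] :
    Finset (Finset (Finset α)) :=
  univ.filter fun P => (∀ p ∈ P, 2 ≤ #p) ∧ ∀ v : α, #(P.filter (v ∈ ·)) = 1

def lowerMapsWithoutSingletonFibres (α : Type*) [Fintype α] [LinearOrder α] :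
    Finset (α → α) :=
  univ.filter fun f => (∀ v, f v ≤ v) ∧ ∀ v, 2 ≤ #(univ.filter (f · = f v))

lemma mem_lowerMapsWithoutSingletonFibres {α : Type*} [Fintype α] [LinearOrder α]
    {f : α → α} :
    f ∈ lowerMapsWithoutSingletonFibres α ↔
      (∀ v, f v ≤ v) ∧ ∀ v, 2 ≤ #(univ.filter (f · = f v)) := by
  simp [lowerMapsWithoutSingletonFibres]

lemma card_partitionsWithoutSingletons_le (α : Type*) [Fintype α] [LinearOrder α] :
    #(partitionsWithoutSingletons α) ≤ #(lowerMapsWithoutSingletonFibres α) := by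
  refine card_le_card_of_injOn blockMin (fun P hP => ?_) (fun P hP Q hQ h => ?_)
  · obtain ⟨hsize, hcov⟩ := (mem_filter.mp hP).2
    refine mem_lowerMapsWithoutSingletonFibres.mpr ⟨blockMin_le P, fun v => ?_⟩
    rw [filter_blockMin_eq hcov]
    exact hsize _ (block_mem_and_mem_block hcov v).1
  · obtain ⟨hPsize, hPcov⟩ := (mem_filter.mp hP).2
    obtain ⟨hQsize, hQcov⟩ := (mem_filter.mp hQ).2
    have hblock : block P = block Q := funext fun v => by
      rw [← filter_blockMin_eq hPcov, ← filter_blockMin_eq hQcov, h]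
    rw [eq_image_block hPcov fun p hp => card_pos.mp (by linarith [hPsize p hp]),
      eq_image_block hQcov fun p hp => card_pos.mp (by linarith [hQsize p hp]), hblock]

lemma card_lowerMapsWithoutSingletonFibres_fin_le (d : ℕ) :
    #(lowerMapsWithoutSingletonFibres (Fin d)) ≤ d ! := by
  calc #(lowerMapsWithoutSingletonFibres (Fin d))
      ≤ #(Fintype.piFinset fun v : Fin d => Iic v) :=
        card_le_card fun f hf => Fintype.mem_piFinset.mpr fun v =>
          mem_Iic.mpr ((mem_lowerMapsWithoutSingletonFibres.mp hf).1 v)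
    _ = d ! := by
        rw [Fintype.card_piFinset, ← prod_range_add_one_eq_factorial,
          ← Fin.prod_univ_eq_prod_range]
        simp

lemma card_lowerMapsWithoutSingletonFibres_fin_four :
    #(lowerMapsWithoutSingletonFibres (Fin 4)) = 5 := by
  decide

lemma S2_eq_card_filter (d i : ℕ) :
    S2 d i = #((partitionsWithoutSingletons (Fin d)).filter (#· = i)) := by
  rw [S2, partitionsWithoutSingletons, filter_filter]
  simp only [and_comm]

lemma sum_S2_le (d : ℕ) (t : Finset ℕ) :
    ∑ i ∈ t, S2 d i ≤ #(partitionsWithoutSingletons (Fin d)) := by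
  set A := (partitionsWithoutSingletons (Fin d)).filter (#· ∈ t)
  calc ∑ i ∈ t, S2 d i = ∑ i ∈ t, #(A.filter (#· = i)) := by
        refine sum_congr rfl fun i hi => ?_
        rw [S2_eq_card_filter, filter_filter]
        congr 1
        ext P
        simp only [mem_filter]
        exact and_congr_right fun _ => ⟨fun h => ⟨h ▸ hi, h⟩, And.right⟩
    _ = #A := (card_eq_sum_card_fiberwise fun P hP => (mem_filter.mp hP).2).symm
    _ ≤ _ := card_filter_le _ _

lemma sum_mul_zpow_le_sum_mul_zpow {β : ℝ} (hβ : 1 ≤ β) (s : Finset ℕ) {a : ℕ → ℝ}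
    (ha : ∀ i ∈ s, 0 ≤ a i) {e : ℕ → ℤ} {E : ℤ} (he : ∀ i ∈ s, e i ≤ E) :
    ∑ i ∈ s, a i * β ^ e i ≤ (∑ i ∈ s, a i) * β ^ E := by
  rw [sum_mul]
  exact sum_le_sum fun i hi =>
    mul_le_mul_of_nonneg_left (zpow_le_zpow_right₀ hβ (he i hi)) (ha i hi)

lemma mul_zpow_neg_le_rpow_neg_half {F β R : ℝ} {m : ℕ} (hm : 1 ≤ m) (hR : 729 ≤ R)
    (hβR : β ≥ 0.6 * R) (hF : F * 27 ≤ 0.6 ^ m * 27 ^ (2 * m)) :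
    F * β ^ (-(m : ℤ)) ≤ R ^ (-(1 : ℝ) / 2) := by
  set s := √R
  have hs : 27 ≤ s := Real.le_sqrt_of_sq_le (by linarith)
  have hβ : 0 < β := by linarith
  have hFs : F * s ≤ β ^ m :=
    calc F * s = F * 27 * (s / 27) := by ring
      _ ≤ 0.6 ^ m * 27 ^ (2 * m) * (s / 27) := by gcongr
      _ ≤ 0.6 ^ m * 27 ^ (2 * m) * (s / 27) ^ (2 * m) := by
        gcongr; exact le_self_pow₀ ((one_le_div₀ (by norm_num)).mpr hs) (by omega)
      _ = (0.6 * s ^ 2) ^ m := by rw [div_pow, pow_mul, pow_mul]; field_simp; ring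
      _ ≤ β ^ m := by rw [Real.sq_sqrt (by linarith)]; gcongr
  have hR_rpow : R ^ (-(1 : ℝ) / 2) = s⁻¹ := by
    rw [neg_div, Real.rpow_neg (by linarith), ← Real.sqrt_eq_rpow]
  rw [hR_rpow, zpow_neg, zpow_natCast, mul_inv_le_iff₀ (by positivity), inv_mul_eq_div,
    le_div_iff₀ (by linarith)]
  exact hFs

theorem stmt_12_general (d β R : ℕ)
    (hd3 : 3 ≤ d) (hd9 : d ≤ 9) (hβR : (β : ℝ) ≥ 0.6 * R) (hR750 : 750 ≤ R) :
    ∑ i ∈ Finset.Icc 1 (d / 2), (S2 d i : ℝ) * (β : ℝ) ^ ((i : ℤ) - d + 1) ≤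
      (R : ℝ) ^ (-(1 : ℝ) / 2) := by
  have hR : (729 : ℝ) ≤ R := by exact_mod_cast (by omega : 729 ≤ R)
  obtain ⟨F, hcard, hF⟩ : ∃ F : ℕ, #(lowerMapsWithoutSingletonFibres (Fin d)) ≤ F ∧
      (F : ℝ) * 27 ≤ 0.6 ^ (d - d / 2 - 1) * 27 ^ (2 * (d - d / 2 - 1)) := by
    by_cases h4 : d = 4
    · -- here `m = 1` and `4 ! = 24` is too large
      subst h4
      exact ⟨5, card_lowerMapsWithoutSingletonFibres_fin_four.le, by norm_num⟩
    · refine ⟨d !, card_lowerMapsWithoutSingletonFibres_fin_le d, ?_⟩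
      interval_cases d <;> norm_num [Nat.factorial] at *
  set m := d - d / 2 - 1
  have hS2 : ∑ i ∈ Icc 1 (d / 2), (S2 d i : ℝ) ≤ F := by
    exact_mod_cast (sum_S2_le d _).trans ((card_partitionsWithoutSingletons_le _).trans hcard)
  calc ∑ i ∈ Icc 1 (d / 2), (S2 d i : ℝ) * (β : ℝ) ^ ((i : ℤ) - d + 1)
      ≤ (∑ i ∈ Icc 1 (d / 2), (S2 d i : ℝ)) * (β : ℝ) ^ (-(m : ℤ)) :=
        sum_mul_zpow_le_sum_mul_zpow (by linarith) _ (fun _ _ => by positivity)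
          fun i hi => by have := (mem_Icc.mp hi).2; omega
    _ ≤ F * (β : ℝ) ^ (-(m : ℤ)) := by gcongr
    _ ≤ (R : ℝ) ^ (-(1 : ℝ) / 2) := mul_zpow_neg_le_rpow_neg_half (by omega) hR hβR hF

theorem stmt_12 (d β R : ℕ) (hβ : 0 < β) (hR : 0 < R)
    (hd3 : 3 ≤ d) (hd9 : d ≤ 9) (hβR : (β : ℝ) ≥ 0.6 * R) (hR750 : 750 ≤ R) :
    ∑ i ∈ Finset.Icc 1 (d / 2), (S2 d i : ℝ) * (β : ℝ) ^ ((i : ℤ) - d + 1) ≤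
      (R : ℝ) ^ (-(1 : ℝ) / 2) :=
  stmt_12_general d β R hd3 hd9 hβR hR750
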